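/- arXiv:2409.18419 — 3 statements merged into one kernel-verified Lean document; each statement's English description precedes it below -/
import Mathlib

section
/- Let G be a simple graph on a finite nonempty vertex set V and let u : V → ℝ. Then the component-mean smoothing ũ of u is edge-constant with respect to G, and for every edge-constant function v : V → ℝ one has ∑_{j ∈ V} (ũ(j) − u(j))² ≤ ∑_{j ∈ V} (v(j) − u(j))²; that is, ũ minimizes the Euclidean distance to u among all edge-constant functions (Proposition 1 of the paper). -/
open scoped Classical
open Finset

private lemma edgeconst_reach {V : Type*} {G : SimpleGraph V} {v : V → ℝ}
    (hv : ∀ i j : V, G.Adj i j → v i = v j) {i j : V} (h : G.Reachable i j) :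
    v i = v j := by
  obtain ⟨p⟩ := h
  induction p with
  | nil => rfl
  | cons h p ih => exact (hv _ _ h).trans ih

private lemma comp_eq {V : Type*} [Fintype V] {G : SimpleGraph V} {i j : V}
    (h : G.Reachable i j) :
    Finset.univ.filter (fun l => G.Reachable i l) =
      Finset.univ.filter (fun l => G.Reachable j l) := by
  ext l
  simp only [mem_filter, mem_univ, true_and]
  exact ⟨fun hl => h.symm.trans hl, fun hl => h.trans hl⟩

private lemma card_pos {V : Type*} [Fintype V] {G : SimpleGraph V} (l : V) :
    (0 : ℝ) < ((Finset.univ.filter (fun m => G.Reachable l m)).card : ℝ) := by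
  have : l ∈ Finset.univ.filter (fun m => G.Reachable l m) := by
    simp [SimpleGraph.Reachable.refl]
  exact_mod_cast Finset.card_pos.mpr ⟨l, this⟩

private lemma cross_eq {V : Type*} [Fintype V] (G : SimpleGraph V)
    (u ut w : V → ℝ)
    (hut : ∀ j : V, ut j =
      (∑ l ∈ Finset.univ.filter (fun l => G.Reachable j l), u l) /
        ((Finset.univ.filter (fun l => G.Reachable j l)).card : ℝ))
    (hw : ∀ i j : V, G.Reachable i j → w i = w j) :
    ∑ j : V, w j * ut j = ∑ j : V, w j * u j := by
  have key : ∀ j : V, w j * ut j =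
      ∑ l : V, if G.Reachable j l then
        w l * u l / ((Finset.univ.filter (fun m => G.Reachable l m)).card : ℝ) else 0 := by
    intro j
    rw [hut j, eq_comm, ← Finset.sum_filter]
    rw [mul_div_assoc' , Finset.mul_sum, Finset.sum_div]
    apply Finset.sum_congr rfl
    intro l hl
    have hr : G.Reachable j l := (Finset.mem_filter.mp hl).2
    rw [hw j l hr, comp_eq hr]
  calc ∑ j : V, w j * ut j
      = ∑ l : V, ∑ j : V, (if G.Reachable j l then
          w l * u l / ((Finset.univ.filter (fun m => G.Reachable l m)).card : ℝ) else 0) := by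
        rw [← Finset.sum_comm]
        exact Finset.sum_congr rfl fun j _ => key j
    _ = ∑ l : V, w l * u l := by
        apply Finset.sum_congr rfl
        intro l _
        rw [← Finset.sum_filter, Finset.sum_const, nsmul_eq_mul]
        have hfe : Finset.univ.filter (fun j => G.Reachable j l) =
            Finset.univ.filter (fun m => G.Reachable l m) := by
          ext m; simp [SimpleGraph.reachable_comm]
        rw [hfe]
        rw [mul_comm]
        exact div_mul_cancel₀ _ (ne_of_gt (card_pos (G := G) l))

/-- Proposition 1: the component-mean smoothing `ut` of `u` is edge-constant and minimizes
the Euclidean distance to `u` among all edge-constant functions. -/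
theorem stmt_0 {V : Type*} [Fintype V] [Nonempty V] (G : SimpleGraph V) (u : V → ℝ)
    (ut : V → ℝ)
    (hut : ∀ j : V, ut j =
      (∑ l ∈ Finset.univ.filter (fun l => G.Reachable j l), u l) /
        ((Finset.univ.filter (fun l => G.Reachable j l)).card : ℝ)) :
    (∀ i j : V, G.Adj i j → ut i = ut j) ∧
    ∀ v : V → ℝ, (∀ i j : V, G.Adj i j → v i = v j) →
      ∑ j : V, (ut j - u j) ^ 2 ≤ ∑ j : V, (v j - u j) ^ 2 := by
  have hutr : ∀ i j : V, G.Reachable i j → ut i = ut j := by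
    intro i j h
    rw [hut i, hut j, comp_eq h]
  refine ⟨fun i j h => hutr i j ⟨h.toWalk⟩, fun v hv => ?_⟩
  set w : V → ℝ := fun j => v j - ut j with hwdef
  have hw : ∀ i j : V, G.Reachable i j → w i = w j := by
    intro i j h
    simp only [hwdef, edgeconst_reach hv h, hutr i j h]
  have hcross := cross_eq G u ut w hut hw
  have expand : ∑ j : V, (v j - u j) ^ 2 =
      ∑ j : V, (v j - ut j) ^ 2 + 2 * (∑ j : V, w j * ut j - ∑ j : V, w j * u j)
        + ∑ j : V, (ut j - u j) ^ 2 := by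
    rw [← Finset.sum_sub_distrib, Finset.mul_sum, ← Finset.sum_add_distrib,
      ← Finset.sum_add_distrib]
    apply Finset.sum_congr rfl
    intro j _
    simp only [hwdef]
    ring
  have hsq : (0:ℝ) ≤ ∑ j : V, (v j - ut j) ^ 2 :=
    Finset.sum_nonneg fun j _ => sq_nonneg _
  rw [expand, hcross]
  linarith
end

section
/- Let D be a real m × p matrix, x ∈ ℝᵖ, β > 0, and λ > 0. If (u_λ, γ_λ) minimizes the penalized split objective L_{β,λ}(u, γ) = (1/2)‖u − x‖₂² + β‖Du − γ‖₂² + λ‖γ‖₁ over ℝᵖ × ℝᵐ, then ‖u_λ − x‖₂² ≤ 2λ‖Dx‖₁ and ‖Du_λ − γ_λ‖₂² ≤ λ‖Dx‖₁ / β. Consequently, as λ → 0⁺ the minimizers (u_λ, γ_λ) converge to (x, Dx), the global minimizer of the split objective L_β. -/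
/-!
Comparing the minimizer with the feasible point `(x, Dx)`, where the two quadratic terms vanish,
gives `½‖u_λ - x‖² + β‖Du_λ - γ_λ‖² + λ‖γ_λ‖₁ ≤ λ‖Dx‖₁`; each nonnegative term on the left is
then bounded by `λ‖Dx‖₁`. Both squared distances are therefore `O(λ)`, so `u_λ → x` and
`Du_λ - γ_λ → 0`, whence `γ_λ → Dx`.
-/

open Matrix Filter Topology

namespace PenalizedSplit

variable {m p : ℕ} (D : Matrix (Fin m) (Fin p) ℝ) (x : Fin p → ℝ) (β lam : ℝ)

noncomputable def objective (u : Fin p → ℝ) (γ : Fin m → ℝ) : ℝ :=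
  (1/2) * ∑ i, (u i - x i) ^ 2 + β * ∑ j, ((D *ᵥ u) j - γ j) ^ 2 + lam * ∑ j, |γ j|

theorem objective_self_mulVec : objective D x β lam x (D *ᵥ x) = lam * ∑ j, |(D *ᵥ x) j| := by
  simp [objective]

variable {D x β lam} {u : Fin p → ℝ} {γ : Fin m → ℝ}

theorem objective_terms_le (hlam : 0 ≤ lam)
    (h : objective D x β lam u γ ≤ objective D x β lam x (D *ᵥ x)) :
    (1/2) * ∑ i, (u i - x i) ^ 2 + β * ∑ j, ((D *ᵥ u) j - γ j) ^ 2 ≤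
      lam * ∑ j, |(D *ᵥ x) j| := by
  rw [objective_self_mulVec] at h
  have : 0 ≤ lam * ∑ j, |γ j| := mul_nonneg hlam (by positivity)
  unfold objective at h
  linarith

theorem sum_sq_sub_le (hβ : 0 ≤ β) (hlam : 0 ≤ lam)
    (h : objective D x β lam u γ ≤ objective D x β lam x (D *ᵥ x)) :
    ∑ i, (u i - x i) ^ 2 ≤ 2 * lam * ∑ j, |(D *ᵥ x) j| := by
  have := objective_terms_le hlam h
  have : 0 ≤ β * ∑ j, ((D *ᵥ u) j - γ j) ^ 2 := mul_nonneg hβ (by positivity)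
  linarith

theorem sum_sq_mulVec_sub_le (hβ : 0 < β) (hlam : 0 ≤ lam)
    (h : objective D x β lam u γ ≤ objective D x β lam x (D *ᵥ x)) :
    ∑ j, ((D *ᵥ u) j - γ j) ^ 2 ≤ lam * (∑ j, |(D *ᵥ x) j|) / β := by
  have := objective_terms_le hlam h
  have : 0 ≤ ∑ i, (u i - x i) ^ 2 := by positivity
  rw [le_div_iff₀ hβ]
  linarith

end PenalizedSplit

theorem tendsto_pi_of_sum_sq_sub_le {α ι : Type*} [Fintype ι] {l : Filter α}
    {f : α → ι → ℝ} {a : ι → ℝ} {g : α → ℝ} (hg : Tendsto g l (𝓝 0))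
    (h : ∀ᶠ t in l, ∑ i, (f t i - a i) ^ 2 ≤ g t) : Tendsto f l (𝓝 a) := by
  refine tendsto_pi_nhds.2 fun i => tendsto_iff_norm_sub_tendsto_zero.2 ?_
  have hsqrt : Tendsto (fun t => √(g t)) l (𝓝 0) := by simpa using hg.sqrt
  refine squeeze_zero' (Eventually.of_forall fun _ => norm_nonneg _) ?_ hsqrt
  filter_upwards [h] with t ht
  refine Real.abs_le_sqrt (le_trans ?_ ht)
  exact Finset.single_le_sum (f := fun k => (f t k - a k) ^ 2) (fun _ _ => sq_nonneg _)
    (Finset.mem_univ i)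

open PenalizedSplit in
/-- Minimizers of the penalized split objective satisfy `‖u_λ − x‖₂² ≤ 2λ‖Dx‖₁` and
`‖Du_λ − γ_λ‖₂² ≤ λ‖Dx‖₁/β`; consequently `(u_λ, γ_λ) → (x, Dx)` as `λ → 0⁺`. -/
theorem stmt_14 {m p : ℕ} (D : Matrix (Fin m) (Fin p) ℝ) (x : Fin p → ℝ)
    (β : ℝ) (hβ : 0 < β)
    (uf : ℝ → Fin p → ℝ) (γf : ℝ → Fin m → ℝ)
    (hmin : ∀ lam > (0 : ℝ), ∀ (u : Fin p → ℝ) (γ : Fin m → ℝ),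
      (1/2) * ∑ i, (uf lam i - x i) ^ 2 +
          β * ∑ j, (D.mulVec (uf lam) j - γf lam j) ^ 2 + lam * ∑ j, |γf lam j| ≤
        (1/2) * ∑ i, (u i - x i) ^ 2 +
          β * ∑ j, (D.mulVec u j - γ j) ^ 2 + lam * ∑ j, |γ j|) :
    (∀ lam > (0 : ℝ),
      ∑ i, (uf lam i - x i) ^ 2 ≤ 2 * lam * ∑ j, |D.mulVec x j| ∧
      ∑ j, (D.mulVec (uf lam) j - γf lam j) ^ 2 ≤ lam * (∑ j, |D.mulVec x j|) / β) ∧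
    Tendsto (fun lam => (uf lam, γf lam)) (nhdsWithin 0 (Set.Ioi 0))
      (nhds (x, D.mulVec x)) := by
  have bounds (lam : ℝ) (hlam : lam > 0) :=
    And.intro (sum_sq_sub_le hβ.le hlam.le (hmin lam hlam x (D *ᵥ x)))
      (sum_sq_mulVec_sub_le hβ hlam.le (hmin lam hlam x (D *ᵥ x)))
  refine ⟨bounds, ?_⟩
  have hlin : Tendsto (fun lam : ℝ => lam * ∑ j, |(D *ᵥ x) j|) (𝓝[>] 0) (𝓝 0) := by
    refine Tendsto.mono_left ?_ nhdsWithin_le_nhds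
    simpa using (continuous_mul_const (∑ j, |(D *ᵥ x) j|)).tendsto 0
  have hu : Tendsto uf (𝓝[>] 0) (𝓝 x) := by
    refine tendsto_pi_of_sum_sq_sub_le (by simpa using hlin.const_mul 2) ?_
    filter_upwards [self_mem_nhdsWithin] with lam hlam
    simpa [mul_assoc] using (bounds lam hlam).1
  have hres : Tendsto (fun lam => D *ᵥ uf lam - γf lam) (𝓝[>] 0) (𝓝 0) := by
    refine tendsto_pi_of_sum_sq_sub_le (by simpa using hlin.div_const β) ?_
    filter_upwards [self_mem_nhdsWithin] with lam hlam
    simpa using (bounds lam hlam).2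
  have hγ : Tendsto γf (𝓝[>] 0) (𝓝 (D *ᵥ x)) := by
    have hDu := ((continuous_const (y := D).matrix_mulVec continuous_id).tendsto x).comp hu
    simpa using hDu.sub hres
  exact hu.prodMk_nhds hγ
end

section
/- Consider the ViRoLBI iteration: fix a real m × p matrix D, x ∈ ℝᵖ, β > 0, κ > 0, α > 0, initial points u₀ ∈ ℝᵖ, z₀ ∈ ℝᵐ, and define for k ≥ 0: γ_k = κ·S(z_k), u_{k+1} = u_k − κα[(u_k − x) + 2β Dᵀ(D u_k − γ_k)], z_{k+1} = z_k − α·2β(γ_k − D u_k), where S is the soft-thresholding operator. Suppose M > 0 is such that the gradient map (u, γ) ↦ ((u − x) + 2β Dᵀ(Du − γ), 2β(γ − Du)) of the split objective L_β is M-Lipschitz on ℝᵖ × ℝᵐ, and that ακM ≤ 2. Then the split objective is nonincreasing along the iterates: L_β(u_{k+1}, γ_{k+1}) ≤ L_β(u_k, γ_k) for every k ≥ 0. -/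
open Matrix

noncomputable def stf (t : ℝ) : ℝ := Real.sign t * max (|t| - 1) 0

lemma stf_eq (t : ℝ) : stf t = t - max (-1) (min 1 t) := by
  rcases lt_trichotomy t 0 with h | h | h
  · rw [stf, Real.sign_of_neg h, abs_of_neg h]
    rcases le_total t (-1) with h1 | h1
    · have : min 1 t = t := min_eq_right (by linarith)
      rw [this, max_eq_left h1, max_eq_left (by linarith)]; ring
    · have : min 1 t = t := min_eq_right (by linarith)
      rw [this, max_eq_right h1, max_eq_right (by linarith)]; ring
  · simp [stf, h]
  · rw [stf, Real.sign_of_pos h, abs_of_pos h]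
    rcases le_total 1 t with h1 | h1
    · rw [min_eq_left h1, max_eq_left (by linarith : (0:ℝ) ≤ t - 1),
        max_eq_right (by linarith : (-1:ℝ) ≤ 1)]; ring
    · rw [min_eq_right h1, max_eq_right (by linarith : t - 1 ≤ (0:ℝ)),
        max_eq_right (by linarith : (-1:ℝ) ≤ t)]; ring

lemma stf_key (a b : ℝ) : (stf a - stf b) ^ 2 ≤ (stf a - stf b) * (a - b) := by
  rw [stf_eq, stf_eq]
  rcases le_total a b with h | h <;>
  · simp only [max_def, min_def]
    split_ifs <;> nlinarith

lemma adj {m p : ℕ} (D : Matrix (Fin m) (Fin p) ℝ) (w : Fin m → ℝ) (v : Fin p → ℝ) :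
    ∑ i, Dᵀ.mulVec w i * v i = ∑ j, w j * D.mulVec v j := by
  simp only [Matrix.mulVec, dotProduct, Matrix.transpose_apply, Finset.sum_mul,
    Finset.mul_sum]
  rw [Finset.sum_comm]
  exact Finset.sum_congr rfl fun j _ => Finset.sum_congr rfl fun i _ => by ring

set_option maxHeartbeats 2000000 in
/-- Descent property of the ViRoLBI iteration: if the gradient map of the split objective
`L_β` is `M`-Lipschitz and `ακM ≤ 2`, then `L_β(u_k, γ_k)` is nonincreasing in `k`. -/
theorem stmt_18 {m p : ℕ} (D : Matrix (Fin m) (Fin p) ℝ) (x : Fin p → ℝ)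
    (β κ α M : ℝ) (hβ : 0 < β) (hκ : 0 < κ) (hα : 0 < α) (hM : 0 < M)
    (u : ℕ → Fin p → ℝ) (z γ : ℕ → Fin m → ℝ)
    (hγ : ∀ k j, γ k j = κ * (Real.sign (z k j) * max (|z k j| - 1) 0))
    (hu : ∀ k, u (k + 1) =
      u k - (κ * α) • ((u k - x) + (2 * β) • Dᵀ.mulVec (D.mulVec (u k) - γ k)))
    (hz : ∀ k, z (k + 1) = z k - α • ((2 * β) • (γ k - D.mulVec (u k))))
    (hLip : ∀ (u₁ u₂ : Fin p → ℝ) (γ₁ γ₂ : Fin m → ℝ),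
      Real.sqrt
        (∑ i, (((u₁ - x) + (2 * β) • Dᵀ.mulVec (D.mulVec u₁ - γ₁)) i -
               ((u₂ - x) + (2 * β) • Dᵀ.mulVec (D.mulVec u₂ - γ₂)) i) ^ 2 +
         ∑ j, (((2 * β) • (γ₁ - D.mulVec u₁)) j -
               ((2 * β) • (γ₂ - D.mulVec u₂)) j) ^ 2) ≤
      M * Real.sqrt (∑ i, (u₁ i - u₂ i) ^ 2 + ∑ j, (γ₁ j - γ₂ j) ^ 2))
    (hstep : α * κ * M ≤ 2) :
    ∀ k : ℕ,
      (1/2) * ∑ i, (u (k + 1) i - x i) ^ 2 +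
          β * ∑ j, (D.mulVec (u (k + 1)) j - γ (k + 1) j) ^ 2 ≤
        (1/2) * ∑ i, (u k i - x i) ^ 2 +
          β * ∑ j, (D.mulVec (u k) j - γ k j) ^ 2 := by
  intro k
  have hκα : (0:ℝ) < κ * α := mul_pos hκ hα
  -- abbreviations
  set du : Fin p → ℝ := u (k+1) - u k with hdu
  set dγ : Fin m → ℝ := γ (k+1) - γ k with hdγg
  set gu : Fin p → ℝ := (u k - x) + (2 * β) • Dᵀ.mulVec (D.mulVec (u k) - γ k) with hgu
  set gγ : Fin m → ℝ := (2 * β) • (γ k - D.mulVec (u k)) with hgγ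
  have hui : ∀ i, u (k+1) i = u k i + du i := by
    intro i; rw [hdu]; simp
  have hbj : ∀ jj, γ (k+1) jj = γ k jj + dγ jj := by
    intro jj; rw [hdγg]; simp
  have hDlin : ∀ jj, D.mulVec (u (k+1)) jj = D.mulVec (u k) jj + D.mulVec du jj := by
    intro jj
    have h1 : u (k+1) = u k + du := by funext i; exact hui i
    rw [h1, Matrix.mulVec_add]; simp
  -- gradient step facts
  have hduc : ∀ i, du i = -(κ * α) * gu i := by
    intro i; rw [hdu, hu k, ← hgu]; simp
  have hdγc : ∀ jj, dγ jj = κ * (stf (z (k+1) jj) - stf (z k jj)) := by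
    intro jj; rw [hdγg]; simp only [Pi.sub_apply, hγ (k+1) jj, hγ k jj, stf]; ring
  have hzc : ∀ jj, z (k+1) jj - z k jj = -(α * gγ jj) := by
    intro jj; rw [hz k, ← hgγ]; simp
  -- per-coordinate bound for the γ-part
  have hB : ∀ jj, (κ * α) * (gγ jj * dγ jj) ≤ -(dγ jj ^ 2) := by
    intro jj
    have hk := stf_key (z (k+1) jj) (z k jj)
    rw [hzc jj] at hk
    rw [hdγc jj]
    nlinarith [mul_le_mul_of_nonneg_left hk (sq_nonneg κ)]
  -- the u-part is exact
  have hA : ∀ i, (κ * α) * (gu i * du i) = -(du i ^ 2) := by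
    intro i; rw [hduc i]; ring
  -- expand the gu-sum using the adjoint identity
  have hgusum : ∑ i, gu i * du i =
      ∑ i, (u k i - x i) * du i +
        (2 * β) * ∑ jj, (D.mulVec (u k) jj - γ k jj) * D.mulVec du jj := by
    have h1 : ∀ i, gu i * du i =
        (u k i - x i) * du i +
          (2 * β) * (Dᵀ.mulVec (D.mulVec (u k) - γ k) i * du i) := by
      intro i; rw [hgu]; simp; ring
    calc ∑ i, gu i * du i
        = ∑ i, ((u k i - x i) * du i +
            (2 * β) * (Dᵀ.mulVec (D.mulVec (u k) - γ k) i * du i)) :=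
          Finset.sum_congr rfl fun i _ => h1 i
      _ = ∑ i, (u k i - x i) * du i +
            (2 * β) * ∑ i, Dᵀ.mulVec (D.mulVec (u k) - γ k) i * du i := by
          rw [Finset.sum_add_distrib, Finset.mul_sum]
      _ = ∑ i, (u k i - x i) * du i +
            (2 * β) * ∑ jj, (D.mulVec (u k) - γ k) jj * D.mulVec du jj := by
          rw [adj]
      _ = _ := by simp
  have hgγsum : ∑ jj, gγ jj * dγ jj =
      (-(2 * β)) * ∑ jj, (D.mulVec (u k) jj - γ k jj) * dγ jj := by
    rw [Finset.mul_sum]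
    refine Finset.sum_congr rfl fun jj _ => ?_
    rw [hgγ]; simp; ring
  -- the exact quadratic expansion
  have hexp :
      (1/2) * ∑ i, (u (k + 1) i - x i) ^ 2 +
          β * ∑ jj, (D.mulVec (u (k + 1)) jj - γ (k + 1) jj) ^ 2 =
      ((1/2) * ∑ i, (u k i - x i) ^ 2 +
          β * ∑ jj, (D.mulVec (u k) jj - γ k jj) ^ 2) +
        (∑ i, gu i * du i) + (∑ jj, gγ jj * dγ jj) +
        ((1/2) * ∑ i, du i ^ 2 + β * ∑ jj, (D.mulVec du jj - dγ jj) ^ 2) := by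
    rw [hgusum, hgγsum]
    have l1 : ∑ i, (u (k+1) i - x i) ^ 2 =
        ∑ i, ((u k i - x i) ^ 2 + 2 * ((u k i - x i) * du i) + du i ^ 2) :=
      Finset.sum_congr rfl fun i _ => by rw [hui i]; ring
    have l2 : ∑ jj, (D.mulVec (u (k+1)) jj - γ (k+1) jj) ^ 2 =
        ∑ jj, ((D.mulVec (u k) jj - γ k jj) ^ 2 +
          2 * ((D.mulVec (u k) jj - γ k jj) * D.mulVec du jj) +
          (-2) * ((D.mulVec (u k) jj - γ k jj) * dγ jj) +
          (D.mulVec du jj - dγ jj) ^ 2) :=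
      Finset.sum_congr rfl fun jj _ => by rw [hDlin jj, hbj jj]; ring
    rw [l1, l2]
    simp only [Finset.sum_add_distrib, ← Finset.mul_sum]
    ring
  -- the Hessian-quadratic form
  set Hu : Fin p → ℝ := fun i => du i + 2 * β * Dᵀ.mulVec (D.mulVec du - dγ) i with hHu
  set Hγ : Fin m → ℝ := fun jj => 2 * β * (dγ jj - D.mulVec du jj) with hHγ
  have hTH : ∑ i, du i * Hu i + ∑ jj, dγ jj * Hγ jj =
      ∑ i, du i ^ 2 + 2 * β * ∑ jj, (D.mulVec du jj - dγ jj) ^ 2 := by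
    have t1 : ∑ i, du i * Hu i =
        ∑ i, du i ^ 2 + 2 * β * ∑ jj, (D.mulVec du - dγ) jj * D.mulVec du jj := by
      calc ∑ i, du i * Hu i
          = ∑ i, (du i ^ 2 + 2 * β * (Dᵀ.mulVec (D.mulVec du - dγ) i * du i)) :=
            Finset.sum_congr rfl fun i _ => by rw [hHu]; ring
        _ = ∑ i, du i ^ 2 + 2 * β * ∑ i, Dᵀ.mulVec (D.mulVec du - dγ) i * du i := by
            rw [Finset.sum_add_distrib, Finset.mul_sum]
        _ = _ := by rw [adj]
    have t2 : ∑ jj, dγ jj * Hγ jj =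
        2 * β * ∑ jj, dγ jj * (dγ jj - D.mulVec du jj) := by
      rw [Finset.mul_sum]
      exact Finset.sum_congr rfl fun jj _ => by rw [hHγ]; ring
    rw [t1, t2]
    have t3 : ∑ jj, (D.mulVec du - dγ) jj * D.mulVec du jj +
        ∑ jj, dγ jj * (dγ jj - D.mulVec du jj) =
        ∑ jj, (D.mulVec du jj - dγ jj) ^ 2 := by
      rw [← Finset.sum_add_distrib]
      exact Finset.sum_congr rfl fun jj _ => by simp; ring
    nlinarith [t3]
  -- Cauchy–Schwarz over the product space
  have hCS : ∑ i, du i * Hu i + ∑ jj, dγ jj * Hγ jj ≤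
      Real.sqrt (∑ i, du i ^ 2 + ∑ jj, dγ jj ^ 2) *
        Real.sqrt (∑ i, Hu i ^ 2 + ∑ jj, Hγ jj ^ 2) := by
    have := Real.sum_mul_le_sqrt_mul_sqrt (Finset.univ : Finset (Fin p ⊕ Fin m))
      (Sum.elim du dγ) (Sum.elim Hu Hγ)
    simpa [Fintype.sum_sum_type] using this
  -- identify Hu, Hγ with the gradient differences and apply the Lipschitz bound
  have hvec : (D.mulVec (u (k+1)) - γ (k+1)) - (D.mulVec (u k) - γ k) =
      D.mulVec du - dγ := by
    funext jj; simp [hDlin jj, hbj jj]; ring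
  have hHu_eq : ∀ i,
      ((u (k+1) - x) + (2 * β) • Dᵀ.mulVec (D.mulVec (u (k+1)) - γ (k+1))) i -
        ((u k - x) + (2 * β) • Dᵀ.mulVec (D.mulVec (u k) - γ k)) i = Hu i := by
    intro i
    have h2 : Dᵀ.mulVec (D.mulVec (u (k+1)) - γ (k+1)) -
        Dᵀ.mulVec (D.mulVec (u k) - γ k) = Dᵀ.mulVec (D.mulVec du - dγ) := by
      rw [← Matrix.mulVec_sub, hvec]
    have h3 : Dᵀ.mulVec (D.mulVec (u (k+1)) - γ (k+1)) i -
        Dᵀ.mulVec (D.mulVec (u k) - γ k) i = Dᵀ.mulVec (D.mulVec du - dγ) i := by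
      rw [← h2]; simp
    rw [hHu]; simp only [Pi.add_apply, Pi.sub_apply, Pi.smul_apply, smul_eq_mul]
    rw [hui i]; nlinarith [h3]
  have hHγ_eq : ∀ jj,
      ((2 * β) • (γ (k+1) - D.mulVec (u (k+1)))) jj -
        ((2 * β) • (γ k - D.mulVec (u k))) jj = Hγ jj := by
    intro jj
    rw [hHγ]; simp only [Pi.smul_apply, Pi.sub_apply, smul_eq_mul]
    rw [hbj jj, hDlin jj]; ring
  have hlip' := hLip (u (k+1)) (u k) (γ (k+1)) (γ k)
  have hsum1 : ∑ i, (((u (k+1) - x) + (2 * β) • Dᵀ.mulVec (D.mulVec (u (k+1)) - γ (k+1))) i -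
      ((u k - x) + (2 * β) • Dᵀ.mulVec (D.mulVec (u k) - γ k)) i) ^ 2 = ∑ i, Hu i ^ 2 :=
    Finset.sum_congr rfl fun i _ => by rw [hHu_eq i]
  have hsum2 : ∑ jj, (((2 * β) • (γ (k+1) - D.mulVec (u (k+1)))) jj -
      ((2 * β) • (γ k - D.mulVec (u k))) jj) ^ 2 = ∑ jj, Hγ jj ^ 2 :=
    Finset.sum_congr rfl fun jj _ => by rw [hHγ_eq jj]
  have hsum3 : ∑ i, (u (k+1) i - u k i) ^ 2 = ∑ i, du i ^ 2 :=
    Finset.sum_congr rfl fun i _ => by rw [hdu]; simp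
  have hsum4 : ∑ jj, (γ (k+1) jj - γ k jj) ^ 2 = ∑ jj, dγ jj ^ 2 :=
    Finset.sum_congr rfl fun jj _ => by rw [hdγg]; simp
  rw [hsum1, hsum2, hsum3, hsum4] at hlip'
  -- assemble the bound on the quadratic term
  set N : ℝ := ∑ i, du i ^ 2 + ∑ jj, dγ jj ^ 2 with hN
  have hN0 : 0 ≤ N := by
    rw [hN]
    apply add_nonneg <;> exact Finset.sum_nonneg fun _ _ => sq_nonneg _
  have hQ : ∑ i, du i ^ 2 + 2 * β * ∑ jj, (D.mulVec du jj - dγ jj) ^ 2 ≤ M * N := by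
    rw [← hTH]
    calc ∑ i, du i * Hu i + ∑ jj, dγ jj * Hγ jj
        ≤ Real.sqrt N * Real.sqrt (∑ i, Hu i ^ 2 + ∑ jj, Hγ jj ^ 2) := hCS
      _ ≤ Real.sqrt N * (M * Real.sqrt N) :=
          mul_le_mul_of_nonneg_left hlip' (Real.sqrt_nonneg N)
      _ = M * (Real.sqrt N * Real.sqrt N) := by ring
      _ = M * N := by rw [Real.mul_self_sqrt hN0]
  -- final assembly
  rw [hexp]
  have hSA : (κ * α) * ∑ i, gu i * du i = -(∑ i, du i ^ 2) := by
    rw [Finset.mul_sum, ← Finset.sum_neg_distrib]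
    exact Finset.sum_congr rfl fun i _ => hA i
  have hSB : (κ * α) * ∑ jj, gγ jj * dγ jj ≤ -(∑ jj, dγ jj ^ 2) := by
    rw [Finset.mul_sum, ← Finset.sum_neg_distrib]
    exact Finset.sum_le_sum fun jj _ => hB jj
  have hstep' : (α * κ * M) * N ≤ 2 * N := mul_le_mul_of_nonneg_right hstep hN0
  nlinarith [hSA, hSB, hQ, hstep', hκα, hN0,
    mul_le_mul_of_nonneg_left hQ hκα.le]
end
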